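/- arXiv:2202.09235 — 2 statements merged into one kernel-verified Lean document; each statement's English description precedes it below -/
import Mathlib

section
/- If s, t are coprime nonzero integers, then s³ − 3st² + t³ ≠ 0. -/
theorem coprime_cubic_ne_zero (s t : ℤ) (hs : s ≠ 0) (ht : t ≠ 0)
    (h : IsCoprime s t) : s ^ 3 - 3 * s * t ^ 2 + t ^ 3 ≠ 0 := by
  intro h0
  have hts : t ∣ s ^ 3 := ⟨3 * s * t - t ^ 2, by linarith [h0]; ⟩
  have hst : s ∣ t ^ 3 := ⟨3 * t ^ 2 - s ^ 2, by ring_nf; linarith [h0]⟩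
  have hut : IsUnit t := (h.symm.pow_right).isUnit_of_dvd hts
  have hus : IsUnit s := (h.pow_right).isUnit_of_dvd hst
  rcases Int.isUnit_iff.mp hut with rfl | rfl <;>
    rcases Int.isUnit_iff.mp hus with rfl | rfl <;> norm_num at h0
end

section
/- The qutrit T gate T = diag(1, ζ, ζ⁸), with ζ = e^{2πi/9}, is not equal to any complex unit scalar multiple of a matrix with entries in the ring 𝕋[ω] = {a + bω : a, b ∈ ℤ[1/3]}. -/
/-!
Since `T = c • M`, the entry `ζ` of `T` is the quotient `M 1 1 / M 0 0` of two elements of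
`𝕋[ω] ⊆ ℚ(ω)`. But `ω = ζ ^ 3` already lies in `ℚ(ζ)`, so `ζ ∈ ℚ(ω)` would force
`ℚ(ζ) = ℚ(ω)`, whose degrees over `ℚ` are `φ 9 = 6` and `φ 3 = 2`.
-/

noncomputable def ζ : ℂ := Complex.exp (2 * Real.pi * Complex.I / 9)
noncomputable def ω : ℂ := ζ ^ 3

/-- The ring 𝕋[ω] of elements a + bω with a, b triadic fractions, as a subset of ℂ. -/
noncomputable def Tω : Set ℂ :=
  {z | ∃ (a b : ℤ) (m : ℕ), z = ((a : ℂ) + (b : ℂ) * ω) / 3 ^ m}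

noncomputable def T : Matrix (Fin 3) (Fin 3) ℂ := !![1, 0, 0; 0, ζ, 0; 0, 0, ζ ^ 8]

open IntermediateField

theorem IsPrimitiveRoot.finrank_adjoin_rat {K : Type*} [Field K] [CharZero K] {μ : K} {n : ℕ}
    (h : IsPrimitiveRoot μ n) (hn : 0 < n) : Module.finrank ℚ ℚ⟮μ⟯ = n.totient := by
  rw [adjoin.finrank (h.isIntegral hn).tower_top, ← Polynomial.cyclotomic_eq_minpoly_rat h hn,
    Polynomial.natDegree_cyclotomic]

theorem isPrimitiveRoot_ζ : IsPrimitiveRoot ζ 9 := by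
  simpa [ζ] using Complex.isPrimitiveRoot_exp 9 (by norm_num)

theorem isPrimitiveRoot_ω : IsPrimitiveRoot ω 3 :=
  isPrimitiveRoot_ζ.pow_of_dvd (by norm_num) (by norm_num)

theorem ζ_not_mem_adjoin_ω : ζ ∉ ℚ⟮ω⟯ := by
  intro hζ
  have hle : ℚ⟮ω⟯ ≤ ℚ⟮ζ⟯ := adjoin_simple_le_iff.mpr (pow_mem (mem_adjoin_simple_self ℚ ζ) 3)
  have heq : ℚ⟮ζ⟯ = ℚ⟮ω⟯ := le_antisymm (adjoin_simple_le_iff.mpr hζ) hle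
  have hdeg := isPrimitiveRoot_ζ.finrank_adjoin_rat (by norm_num)
  rw [heq, isPrimitiveRoot_ω.finrank_adjoin_rat (by norm_num)] at hdeg
  exact absurd hdeg (by decide)

theorem Tω_subset_adjoin_ω : Tω ⊆ ℚ⟮ω⟯ := by
  rintro _ ⟨a, b, m, rfl⟩
  have hω := mem_adjoin_simple_self ℚ ω
  exact div_mem
    (add_mem (IntermediateField.intCast_mem _ a) (mul_mem (IntermediateField.intCast_mem _ b) hω))
    (pow_mem (IntermediateField.natCast_mem _ 3) m)

theorem T_not_scalar_multiple_of_Tomega_matrix :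
    ¬ ∃ (c : ℂ) (M : Matrix (Fin 3) (Fin 3) ℂ),
      ‖c‖ = 1 ∧ (∀ i j, M i j ∈ Tω) ∧ T = c • M := by
  rintro ⟨c, M, -, hM, hT⟩
  have h00 : 1 = c * M 0 0 := by simpa [T] using congrFun (congrFun hT 0) 0
  have h11 : ζ = c * M 1 1 := by simpa [T] using congrFun (congrFun hT 1) 1
  have hM00 : M 0 0 ≠ 0 := by rintro h; simp [h] at h00
  have hratio : ζ = M 1 1 / M 0 0 := by
    rw [eq_div_iff hM00, h11, mul_right_comm, ← h00, one_mul]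
  exact ζ_not_mem_adjoin_ω <| hratio ▸
    div_mem (Tω_subset_adjoin_ω (hM 1 1)) (Tω_subset_adjoin_ω (hM 0 0))
end
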